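/- For any convex domain G ⊊ ℝⁿ and all x, y ∈ G, w_G(x,y) ≤ s_G(x,y) ≤ √2·w_G(x,y). -/

import Mathlib

/-! For every `z ∉ G`, reflecting `y` in a hyperplane supporting `G` at `z` gives a point `y'`
with `|x - z| + |z - y| ≥ |x - y'| = √(|x-y|² + 4ab) ≥ √(|x-y|² + 4 d_G(x) d_G(y))`, where `a, b`
are the distances of `x, y` to the hyperplane; so `s_G ≤ p_G ≤ √2 j*_G`.

A point `x̃ ∈ X̃` is the mirror image of `x` in the hyperplane supporting `G` at the nearest
boundary point `(x + x̃)/2`. The segment from `y` to `x̃` crosses that hyperplane at some `z ∉ G`,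
and `|x - z| + |z - y| = |x̃ - z| + |z - y| = |y - x̃|`; hence
`inf_{∂G} (|x - ·| + |· - y|) ≤ |y - x̃|`, which is `w_G ≤ s_G`. Finally `j*_G ≤ w_G` since
`|y - x̃| ≤ |x - y| + 2 d_G(x)`. -/

open Metric Set

variable {E : Type*} [NormedAddCommGroup E] [NormedSpace ℝ E]

/-- Distance to the boundary of `G`. -/
noncomputable def dG (G : Set E) (x : E) : ℝ := Metric.infDist x (frontier G)

/-- The point pair function `p_G`. -/
noncomputable def pG (G : Set E) (x y : E) : ℝ :=
  dist x y / Real.sqrt (dist x y ^ 2 + 4 * dG G x * dG G y)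

/-- The triangular ratio metric `s_G`. -/
noncomputable def sG (G : Set E) (x y : E) : ℝ :=
  dist x y / ⨅ z : frontier G, (dist x (z : E) + dist (z : E) y)

/-- The `j*_G` metric. -/
noncomputable def jG (G : Set E) (x y : E) : ℝ :=
  dist x y / (dist x y + 2 * min (dG G x) (dG G y))

/-- The set `X̃` of points `x̃` with `|x−x̃| = 2 d_G(x)` whose midpoint with `x` lies on `∂G`. -/
def Xt (G : Set E) (x : E) : Set E :=
  {x' | dist x x' = 2 * dG G x ∧ (2⁻¹ : ℝ) • (x + x') ∈ frontier G}

/-- The quasi-metric `w_G` defined for convex domains. -/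
noncomputable def wG (G : Set E) (x y : E) : ℝ :=
  dist x y / min (Metric.infDist x (Xt G y)) (Metric.infDist y (Xt G x))


open RealInnerProductSpace

theorem IsPreconnected.inter_frontier_nonempty {X : Type*} [TopologicalSpace X] {s t : Set X}
    (hs : IsPreconnected s) (hst : (s ∩ t).Nonempty) (hst' : (s \ t).Nonempty) :
    (s ∩ frontier t).Nonempty := by
  by_contra h
  have hsub : s ⊆ interior t ∪ (closure t)ᶜ := fun w hw => by
    by_cases hwt : w ∈ closure t
    · exact Or.inl (by_contra fun hwi => h ⟨w, hw, hwt, hwi⟩)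
    · exact Or.inr hwt
  obtain ⟨a, has, hat⟩ := hst
  obtain ⟨b, hbs, hbt⟩ := hst'
  have ha : a ∈ interior t := (hsub has).resolve_right (not_not.mpr (subset_closure hat))
  have hb : b ∈ (closure t)ᶜ := (hsub hbs).resolve_left fun hbi => hbt (interior_subset hbi)
  obtain ⟨w, -, hwi, hwc⟩ := hs _ _ isOpen_interior isClosed_closure.isOpen_compl hsub
    ⟨a, has, ha⟩ ⟨b, hbs, hb⟩
  exact hwc (interior_subset_closure hwi)

theorem IsOpen.notMem_of_mem_frontier {X : Type*} [TopologicalSpace X] {s : Set X} {x : X}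
    (hs : IsOpen s) (hx : x ∈ frontier s) : x ∉ s :=
  fun h => hx.2 (by rwa [hs.interior_eq])

noncomputable def sGDenom {α : Type*} [PseudoMetricSpace α] (G : Set α) (x y : α) : ℝ :=
  ⨅ z : frontier G, (dist x (z : α) + dist (z : α) y)

theorem sGDenom_comm {α : Type*} [PseudoMetricSpace α] (G : Set α) (x y : α) :
    sGDenom G x y = sGDenom G y x := by
  simp only [sGDenom, dist_comm x, dist_comm _ y, add_comm]

theorem dG_pos {α : Type*} [NormedAddCommGroup α] {G : Set α} {x : α} (hG : IsOpen G)
    (hfr : (frontier G).Nonempty) (hx : x ∈ G) : 0 < dG G x :=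
  (isClosed_frontier.notMem_iff_infDist_pos hfr).mp fun h => hG.notMem_of_mem_frontier h hx

theorem sqrt_dist_sq_add_four_mul_dG_pos {α : Type*} [NormedAddCommGroup α] {G : Set α}
    {x y : α} (hG : IsOpen G) (hfr : (frontier G).Nonempty) (hx : x ∈ G) (hy : y ∈ G) :
    0 < √(dist x y ^ 2 + 4 * dG G x * dG G y) := by
  have := dG_pos hG hfr hx
  have := dG_pos hG hfr hy
  positivity

section Normed

variable {G : Set E} {x y : E}

theorem exists_mem_frontier_dist_add_dist_eq {p : E} (hx : x ∈ G) (hp : p ∉ G) :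
    ∃ z ∈ frontier G, dist x z + dist z p = dist x p := by
  obtain ⟨z, hzseg, hz⟩ := (convex_segment x p).isPreconnected.inter_frontier_nonempty
    ⟨x, left_mem_segment ℝ x p, hx⟩ ⟨p, right_mem_segment ℝ x p, hp⟩
  exact ⟨z, hz, dist_add_dist_of_mem_segment hzseg⟩

theorem dG_le_dist_of_notMem {p : E} (hx : x ∈ G) (hp : p ∉ G) : dG G x ≤ dist x p := by
  obtain ⟨z, hz, hxz⟩ := exists_mem_frontier_dist_add_dist_eq hx hp
  have hxz' : dG G x ≤ dist x z := Metric.infDist_le_dist_of_mem hz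
  linarith [dist_nonneg (x := z) (y := p)]

theorem sGDenom_le_of_notMem {p : E} (hx : x ∈ G) (hp : p ∉ G) (y : E) :
    sGDenom G x y ≤ dist x p + dist p y := by
  obtain ⟨z, hz, hxz⟩ := exists_mem_frontier_dist_add_dist_eq hx hp
  have hbdd : BddBelow (Set.range fun z : frontier G => dist x (z : E) + dist (z : E) y) :=
    ⟨0, by rintro _ ⟨w, rfl⟩; positivity⟩
  calc sGDenom G x y ≤ dist x z + dist z y := ciInf_le hbdd ⟨z, hz⟩
    _ ≤ dist x p + dist p y := by linarith [dist_triangle z p y]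

theorem Xt_nonempty [ProperSpace E] (hfr : (frontier G).Nonempty) (x : E) :
    (Xt G x).Nonempty := by
  obtain ⟨z, hz, hxz⟩ := isClosed_frontier.exists_infDist_eq_dist hfr x
  refine ⟨(2 : ℝ) • z - x, ?_, ?_⟩
  · rw [dist_eq_norm, show x - ((2 : ℝ) • z - x) = (2 : ℝ) • (x - z) by module, norm_smul,
      ← dist_eq_norm, Real.norm_two, dG, hxz]
  · rwa [show (2⁻¹ : ℝ) • (x + ((2 : ℝ) • z - x)) = z by module]

theorem infDist_Xt_le (hne : (Xt G x).Nonempty) (y : E) :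
    Metric.infDist y (Xt G x) ≤ dist x y + 2 * dG G x := by
  obtain ⟨x', hx'⟩ := hne
  calc Metric.infDist y (Xt G x) ≤ dist y x' := Metric.infDist_le_dist_of_mem hx'
    _ ≤ dist y x + dist x x' := dist_triangle y x x'
    _ = dist x y + 2 * dG G x := by rw [dist_comm y x, hx'.1]

theorem min_infDist_Xt_le [ProperSpace E] (hfr : (frontier G).Nonempty) (x y : E) :
    min (Metric.infDist x (Xt G y)) (Metric.infDist y (Xt G x))
      ≤ dist x y + 2 * min (dG G x) (dG G y) := by
  have hA := infDist_Xt_le (Xt_nonempty hfr y) x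
  have hB := infDist_Xt_le (Xt_nonempty hfr x) y
  rw [dist_comm y x] at hA
  rcases le_total (dG G x) (dG G y) with h | h
  · rw [min_eq_left h]
    exact min_le_of_right_le hB
  · rw [min_eq_right h]
    exact min_le_of_left_le hA

end Normed

section InnerProduct

variable {F : Type*} [NormedAddCommGroup F] [InnerProductSpace ℝ F] {G : Set F} {x y : F}

theorem exists_norm_eq_one_inner_lt [CompleteSpace F] (hGopen : IsOpen G) (hGconv : Convex ℝ G)
    (hG : G.Nonempty) {z : F} (hz : z ∉ G) :
    ∃ e : F, ‖e‖ = 1 ∧ ∀ a ∈ G, ⟪e, a⟫ < ⟪e, z⟫ := by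
  obtain ⟨f, hf⟩ := geometric_hahn_banach_open_point hGconv hGopen hz
  set v := (InnerProductSpace.toDual ℝ F).symm f
  have hv : ∀ u, ⟪v, u⟫ = f u := fun u => InnerProductSpace.toDual_symm_apply
  obtain ⟨a, ha⟩ := hG
  have hv0 : v ≠ 0 := fun h0 => by simpa [← hv, h0] using hf a ha
  refine ⟨‖v‖⁻¹ • v, norm_smul_inv_norm hv0, fun b hb => ?_⟩
  simp only [real_inner_smul_left, hv]
  exact mul_lt_mul_of_pos_left (hf b hb) (inv_pos.mpr (norm_pos_iff.mpr hv0))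

theorem dG_le_of_forall_inner_lt {e : F} (he : ‖e‖ = 1) {c : ℝ} (hc : ∀ a ∈ G, ⟪e, a⟫ < c)
    (hx : x ∈ G) : dG G x ≤ c - ⟪e, x⟫ := by
  have hee : ⟪e, e⟫ = 1 := by rw [real_inner_self_eq_norm_sq, he, one_pow]
  have hp : x + (c - ⟪e, x⟫) • e ∉ G := fun hp => by
    have := hc _ hp
    rw [inner_add_right, real_inner_smul_right, hee] at this
    linarith
  calc dG G x ≤ dist x (x + (c - ⟪e, x⟫) • e) := dG_le_dist_of_notMem hx hp
    _ = c - ⟪e, x⟫ := by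
      rw [dist_self_add_right, norm_smul, he, mul_one, Real.norm_of_nonneg]
      linarith [hc x hx]

theorem dist_add_two_mul_smul_eq {e : F} (he : ‖e‖ = 1) {z : F} {b : ℝ} (hb : ⟪e, z - y⟫ = b) :
    dist z (y + (2 * b) • e) = dist z y := by
  rw [dist_eq_norm, dist_eq_norm, show z - (y + (2 * b) • e) = (z - y) - (2 * b) • e by abel,
    ← sq_eq_sq₀ (norm_nonneg _) (norm_nonneg _), norm_sub_sq_real, real_inner_smul_right,
    real_inner_comm, hb, norm_smul, he, Real.norm_eq_abs, mul_one, sq_abs]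
  ring

variable [CompleteSpace F]

theorem sqrt_le_dist_add_dist_of_notMem (hGopen : IsOpen G) (hGconv : Convex ℝ G) (hx : x ∈ G)
    (hy : y ∈ G) {z : F} (hz : z ∉ G) :
    √(dist x y ^ 2 + 4 * dG G x * dG G y) ≤ dist x z + dist z y := by
  obtain ⟨e, he, hsupp⟩ := exists_norm_eq_one_inner_lt hGopen hGconv ⟨x, hx⟩ hz
  set c := ⟪e, z⟫
  have hDx := dG_le_of_forall_inner_lt he hsupp hx
  have hDy := dG_le_of_forall_inner_lt he hsupp hy
  have hreflect : dist z (y + (2 * (c - ⟪e, y⟫)) • e) = dist z y :=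
    dist_add_two_mul_smul_eq he (inner_sub_right e z y)
  have hsq : dist x (y + (2 * (c - ⟪e, y⟫)) • e) ^ 2
      = dist x y ^ 2 + 4 * (c - ⟪e, x⟫) * (c - ⟪e, y⟫) := by
    rw [dist_eq_norm', dist_eq_norm', show y + (2 * (c - ⟪e, y⟫)) • e - x
      = (y - x) + (2 * (c - ⟪e, y⟫)) • e by abel, norm_add_sq_real, real_inner_smul_right,
      inner_sub_left, real_inner_comm e x, real_inner_comm e y, norm_smul, he, Real.norm_eq_abs,
      mul_one, sq_abs]
    ring
  calc √(dist x y ^ 2 + 4 * dG G x * dG G y)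
      ≤ √(dist x (y + (2 * (c - ⟪e, y⟫)) • e) ^ 2) := by
        gcongr
        rw [hsq]
        have hx0 : 0 ≤ dG G x := Metric.infDist_nonneg
        have hy0 : 0 ≤ dG G y := Metric.infDist_nonneg
        gcongr
        linarith
    _ = dist x (y + (2 * (c - ⟪e, y⟫)) • e) := Real.sqrt_sq dist_nonneg
    _ ≤ dist x z + dist z y := hreflect ▸ dist_triangle _ _ _

theorem exists_norm_eq_one_inner_lt_of_mem_Xt (hGopen : IsOpen G) (hGconv : Convex ℝ G)
    (hx : x ∈ G) {x' : F} (hx' : x' ∈ Xt G x) :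
    ∃ e : F, ‖e‖ = 1 ∧ (∀ a ∈ G, ⟪e, a⟫ < ⟪e, x⟫ + dG G x) ∧ x' = x + (2 * dG G x) • e := by
  obtain ⟨hdist, hmid⟩ := hx'
  set z := (2⁻¹ : ℝ) • (x + x')
  have hzG : z ∉ G := hGopen.notMem_of_mem_frontier hmid
  obtain ⟨e, he, hsupp⟩ := exists_norm_eq_one_inner_lt hGopen hGconv ⟨x, hx⟩ hzG
  have hzx : z - x = (2⁻¹ : ℝ) • (x' - x) := by module
  have hnorm : ‖z - x‖ = dG G x := by
    rw [hzx, norm_smul, ← dist_eq_norm', hdist, Real.norm_of_nonneg (by norm_num)]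
    ring
  -- `d_G(x) ≤ ⟪e, z - x⟫ ≤ ‖z - x‖ = d_G(x)`, so `z - x` is a nonnegative multiple of `e`.
  have hinner : ⟪e, z - x⟫ = dG G x := by
    refine le_antisymm ?_ ?_
    · simpa [he, hnorm] using real_inner_le_norm e (z - x)
    · rw [inner_sub_right]
      exact dG_le_of_forall_inner_lt he hsupp hx
  have hfoot : z - x = dG G x • e := by
    have := inner_eq_norm_mul_iff_real.mp (by rw [hinner, he, hnorm, one_mul])
    rwa [he, one_smul, hnorm, eq_comm] at this
  refine ⟨e, he, fun a ha => ?_, ?_⟩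
  · have := hsupp a ha
    rw [inner_sub_right] at hinner
    linarith
  · rw [mul_smul, ← hfoot, hzx]
    module

theorem sGDenom_le_dist_of_mem_Xt (hGopen : IsOpen G) (hGconv : Convex ℝ G) (hx : x ∈ G)
    (hy : y ∈ G) {x' : F} (hx' : x' ∈ Xt G x) : sGDenom G x y ≤ dist y x' := by
  obtain ⟨e, he, hsupp, rfl⟩ := exists_norm_eq_one_inner_lt_of_mem_Xt hGopen hGconv hx hx'
  set D := dG G x
  have hD : 0 ≤ D := Metric.infDist_nonneg
  have hee : ⟪e, e⟫ = 1 := by rw [real_inner_self_eq_norm_sq, he, one_pow]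
  set b := ⟪e, x⟫ + D - ⟪e, y⟫
  have hb : 0 < b := sub_pos.mpr (hsupp y hy)
  have hbD : 0 < b + D := by linarith
  -- `z'` is where the segment from `y` to the reflection `x'` of `x` crosses the hyperplane.
  set z' := y + (b / (b + D)) • (x + (2 * D) • e - y)
  have hz'seg : z' ∈ segment ℝ y (x + (2 * D) • e) := by
    rw [segment_eq_image']
    exact ⟨b / (b + D), ⟨(div_pos hb hbD).le, (div_le_one hbD).mpr (by linarith)⟩, rfl⟩
  have hz' : ⟪e, z'⟫ = ⟪e, x⟫ + D := by
    simp only [z', inner_add_right, inner_sub_right, real_inner_smul_right, hee]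
    field_simp
    ring
  have hz'G : z' ∉ G := fun h => (hsupp z' h).ne hz'
  have hreflect : dist z' (x + (2 * D) • e) = dist z' x :=
    dist_add_two_mul_smul_eq he (by rw [inner_sub_right, hz']; ring)
  calc sGDenom G x y ≤ dist x z' + dist z' y := sGDenom_le_of_notMem hx hz'G y
    _ = dist y z' + dist z' (x + (2 * D) • e) := by
      rw [hreflect, dist_comm z' x, dist_comm y z']; ring
    _ = dist y (x + (2 * D) • e) := dist_add_dist_of_mem_segment hz'seg

theorem sGDenom_le_min_infDist_Xt [ProperSpace F] (hGopen : IsOpen G) (hGconv : Convex ℝ G)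
    (hfr : (frontier G).Nonempty) (hx : x ∈ G) (hy : y ∈ G) :
    sGDenom G x y ≤ min (Metric.infDist x (Xt G y)) (Metric.infDist y (Xt G x)) := by
  have key : ∀ {u v : F}, u ∈ G → v ∈ G → sGDenom G u v ≤ Metric.infDist v (Xt G u) :=
    fun {u v} hu hv => by
      have := (Xt_nonempty hfr u).to_subtype
      rw [Metric.infDist_eq_iInf]
      exact le_ciInf fun u' => sGDenom_le_dist_of_mem_Xt hGopen hGconv hu hv u'.2
  exact le_min (sGDenom_comm G x y ▸ key hy hx) (key hx hy)

theorem sqrt_le_sGDenom (hGopen : IsOpen G) (hGconv : Convex ℝ G) (hfr : (frontier G).Nonempty)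
    (hx : x ∈ G) (hy : y ∈ G) :
    √(dist x y ^ 2 + 4 * dG G x * dG G y) ≤ sGDenom G x y := by
  have := hfr.to_subtype
  exact le_ciInf fun z => sqrt_le_dist_add_dist_of_notMem hGopen hGconv hx hy
    (hGopen.notMem_of_mem_frontier z.2)

theorem sGDenom_pos (hGopen : IsOpen G) (hGconv : Convex ℝ G) (hfr : (frontier G).Nonempty)
    (hx : x ∈ G) (hy : y ∈ G) : 0 < sGDenom G x y :=
  (sqrt_dist_sq_add_four_mul_dG_pos hGopen hfr hx hy).trans_le
    (sqrt_le_sGDenom hGopen hGconv hfr hx hy)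

theorem sG_le_pG (hGopen : IsOpen G) (hGconv : Convex ℝ G) (hfr : (frontier G).Nonempty)
    (hx : x ∈ G) (hy : y ∈ G) : sG G x y ≤ pG G x y :=
  div_le_div_of_nonneg_left dist_nonneg (sqrt_dist_sq_add_four_mul_dG_pos hGopen hfr hx hy)
    (sqrt_le_sGDenom hGopen hGconv hfr hx hy)

theorem wG_le_sG [ProperSpace F] (hGopen : IsOpen G) (hGconv : Convex ℝ G)
    (hfr : (frontier G).Nonempty) (hx : x ∈ G) (hy : y ∈ G) : wG G x y ≤ sG G x y :=
  div_le_div_of_nonneg_left dist_nonneg (sGDenom_pos hGopen hGconv hfr hx hy)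
    (sGDenom_le_min_infDist_Xt hGopen hGconv hfr hx hy)

theorem jG_le_wG [ProperSpace F] (hGopen : IsOpen G) (hGconv : Convex ℝ G)
    (hfr : (frontier G).Nonempty) (hx : x ∈ G) (hy : y ∈ G) : jG G x y ≤ wG G x y :=
  div_le_div_of_nonneg_left dist_nonneg
    ((sGDenom_pos hGopen hGconv hfr hx hy).trans_le
      (sGDenom_le_min_infDist_Xt hGopen hGconv hfr hx hy))
    (min_infDist_Xt_le hfr x y)

end InnerProduct

theorem pG_le_sqrt_two_mul_jG {α : Type*} [NormedAddCommGroup α] (G : Set α) (x y : α) :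
    pG G x y ≤ √2 * jG G x y := by
  rcases eq_or_ne x y with rfl | hxy
  · simp [pG, jG]
  have hd : 0 < dist x y := dist_pos.mpr hxy
  have hDx : 0 ≤ dG G x := Metric.infDist_nonneg
  have hDy : 0 ≤ dG G y := Metric.infDist_nonneg
  set m := min (dG G x) (dG G y)
  have hm : 0 ≤ m := le_min hDx hDy
  have hm2 : m * m ≤ dG G x * dG G y :=
    mul_le_mul (min_le_left _ _) (min_le_right _ _) hm hDx
  have key : dist x y + 2 * m ≤ √2 * √(dist x y ^ 2 + 4 * dG G x * dG G y) := by
    rw [← Real.sqrt_mul zero_le_two]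
    exact Real.le_sqrt_of_sq_le (by nlinarith [sq_nonneg (dist x y - 2 * m)])
  rw [pG, jG, mul_div_assoc', div_le_div_iff₀ (by positivity) (by positivity)]
  nlinarith [mul_le_mul_of_nonneg_left key hd.le]

theorem w_le_s_le_sqrt_two_w_convex_general (n : ℕ) (G : Set (EuclideanSpace ℝ (Fin n)))
    (hGopen : IsOpen G) (hGconv : Convex ℝ G)
    (hGne : G ≠ Set.univ)
    (x y : EuclideanSpace ℝ (Fin n)) (hx : x ∈ G) (hy : y ∈ G) :
    wG G x y ≤ sG G x y ∧ sG G x y ≤ Real.sqrt 2 * wG G x y := by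
  have hfr : (frontier G).Nonempty := nonempty_frontier_iff.mpr ⟨⟨x, hx⟩, hGne⟩
  refine ⟨wG_le_sG hGopen hGconv hfr hx hy, ?_⟩
  calc sG G x y ≤ pG G x y := sG_le_pG hGopen hGconv hfr hx hy
    _ ≤ √2 * jG G x y := pG_le_sqrt_two_mul_jG G x y
    _ ≤ √2 * wG G x y := by gcongr; exact jG_le_wG hGopen hGconv hfr hx hy

/-- For any convex domain `G ⊊ ℝⁿ` and all `x, y ∈ G`,
`w_G(x,y) ≤ s_G(x,y) ≤ √2 · w_G(x,y)`. -/
theorem w_le_s_le_sqrt_two_w_convex (n : ℕ) (G : Set (EuclideanSpace ℝ (Fin n)))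
    (hGopen : IsOpen G) (hGconv : Convex ℝ G) (hGnonempty : G.Nonempty)
    (hGne : G ≠ Set.univ)
    (x y : EuclideanSpace ℝ (Fin n)) (hx : x ∈ G) (hy : y ∈ G) :
    wG G x y ≤ sG G x y ∧ sG G x y ≤ Real.sqrt 2 * wG G x y :=
  w_le_s_le_sqrt_two_w_convex_general n G hGopen hGconv hGne x y hx hy
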